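/- Let D be a triangulated category and let B, C be strict full triangulated subcategories of D with Hom_D(B,C) = 0 for all B ∈ B, C ∈ C. Suppose B → A → C → B[1] and B' → A → C' → B'[1] are two distinguished triangles with B, B' ∈ B and C, C' ∈ C, with the same middle object A. Then there exists a unique morphism φ : B → B' commuting with the maps to A, and φ is an isomorphism; similarly there is a unique morphism ψ : C → C' commuting with the maps from A, and ψ is an isomorphism. -/

import Mathlib

open CategoryTheory Limits Pretriangulated

universe v u

namespace CategoryTheory.Triangulated

/-- The pre-2025 Mathlib notion of a triangulated subcategory (removed since). -/
structure Subcategory (C : Type*) [Category C] [HasZeroObject C] [HasShift C ℤ] [Preadditive C]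
    [∀ n : ℤ, (shiftFunctor C n).Additive] [Pretriangulated C] where
  P : C → Prop
  zero' : ∃ (Z : C) (_ : IsZero Z), P Z
  shift (X : C) (n : ℤ) : P X → P (X⟦n⟧)
  ext₂' (T : Triangle C) (_ : T ∈ distTriang C) : P T.obj₁ → P T.obj₃ →
    ∃ (Y : C) (_ : P Y), Nonempty (T.obj₂ ≅ Y)

end CategoryTheory.Triangulated

/-!
In a distinguished triangle `X → A → Z → X⟦1⟧`, a map `W ⟶ A` killed by `A ⟶ Z` lifts to `X`, and
the lift is unique when `Hom(W, Z⟦-1⟧) = 0`. For `W ∈ B` and `Z ∈ C` both conditions hold by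
orthogonality, `C` being closed under shifts, so every map from an object of `B` to `A` factors
uniquely through `B₁ → A` and through `B₂ → A`. The comparison maps in both directions then compose
to endomorphisms over `A`, which must be identities. Dually for maps out of `A` into `C`.
-/

section Category

variable {𝒞 : Type*} [Category 𝒞]

theorem isIso_of_comp_eq_of_comp_eq {X Y A : 𝒞} {f : X ⟶ A} {g : Y ⟶ A} {φ : X ⟶ Y}
    {φ' : Y ⟶ X} (hφ : φ ≫ g = f) (hφ' : φ' ≫ f = g)
    (hX : ∀ e : X ⟶ X, e ≫ f = f → e = 𝟙 X) (hY : ∀ e : Y ⟶ Y, e ≫ g = g → e = 𝟙 Y) :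
    IsIso φ :=
  ⟨φ', hX _ (by rw [Category.assoc, hφ', hφ]), hY _ (by rw [Category.assoc, hφ, hφ'])⟩

theorem isIso_of_eq_comp_of_eq_comp {X Y A : 𝒞} {f : A ⟶ X} {g : A ⟶ Y} {ψ : X ⟶ Y}
    {ψ' : Y ⟶ X} (hψ : f ≫ ψ = g) (hψ' : g ≫ ψ' = f)
    (hX : ∀ e : X ⟶ X, f ≫ e = f → e = 𝟙 X) (hY : ∀ e : Y ⟶ Y, g ≫ e = g → e = 𝟙 Y) :
    IsIso ψ :=
  ⟨ψ', hX _ (by rw [← Category.assoc, hψ, hψ']), hY _ (by rw [← Category.assoc, hψ', hψ])⟩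

end Category

namespace CategoryTheory.Pretriangulated.Triangle

variable {D : Type u} [Category.{v} D] [HasZeroObject D] [HasShift D ℤ] [Preadditive D]
    [∀ n : ℤ, Functor.Additive (CategoryTheory.shiftFunctor D n)] [Pretriangulated D]
    (T : Triangle D) (hT : T ∈ distTriang D)
include hT

theorem existsUnique_lift {X : D} (u : X ⟶ T.obj₂) (hu : u ≫ T.mor₂ = 0)
    (hX : ∀ g : X ⟶ T.obj₃⟦(-1 : ℤ)⟧, g = 0) : ∃! φ : X ⟶ T.obj₁, φ ≫ T.mor₁ = u := by
  obtain ⟨φ, rfl⟩ := T.coyoneda_exact₂ hT u hu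
  refine ⟨φ, rfl, fun φ' (hφ' : φ' ≫ T.mor₁ = φ ≫ T.mor₁) => ?_⟩
  obtain ⟨g, hg⟩ := T.invRotate.coyoneda_exact₂ (inv_rot_of_distTriang _ hT) (φ' - φ)
    (show (φ' - φ) ≫ T.mor₁ = 0 by rw [Preadditive.sub_comp, hφ', sub_self])
  rw [← sub_eq_zero, hg, show g = 0 from hX g]
  exact zero_comp

theorem existsUnique_desc {Y : D} (u : T.obj₂ ⟶ Y) (hu : T.mor₁ ≫ u = 0)
    (hY : ∀ g : T.obj₁⟦(1 : ℤ)⟧ ⟶ Y, g = 0) : ∃! ψ : T.obj₃ ⟶ Y, T.mor₂ ≫ ψ = u := by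
  obtain ⟨ψ, rfl⟩ := T.yoneda_exact₂ hT u hu
  refine ⟨ψ, rfl, fun ψ' (hψ' : T.mor₂ ≫ ψ' = T.mor₂ ≫ ψ) => ?_⟩
  obtain ⟨g, hg⟩ := T.yoneda_exact₃ hT (ψ' - ψ) (by rw [Preadditive.comp_sub, hψ', sub_self])
  rw [← sub_eq_zero, hg, show g = 0 from hY g, comp_zero]

end CategoryTheory.Pretriangulated.Triangle

namespace CategoryTheory.Triangulated.Subcategory

variable {D : Type u} [Category.{v} D] [HasZeroObject D] [HasShift D ℤ] [Preadditive D]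
    [∀ n : ℤ, (shiftFunctor D n).Additive] [Pretriangulated D] (B C : Subcategory D)

theorem existsUnique_lift_of_orthogonal (horth : ∀ (X Y : D), B.P X → C.P Y → ∀ f : X ⟶ Y, f = 0)
    {W A X Z : D} (hW : B.P W) (hZ : C.P Z) {f : X ⟶ A} {g : A ⟶ Z} {h : Z ⟶ X⟦(1 : ℤ)⟧}
    (hT : Triangle.mk f g h ∈ distTriang D) (u : W ⟶ A) : ∃! φ : W ⟶ X, φ ≫ f = u :=
  Triangle.existsUnique_lift _ hT u (horth _ _ hW hZ _) (horth _ _ hW (C.shift _ _ hZ))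

theorem existsUnique_desc_of_orthogonal (horth : ∀ (X Y : D), B.P X → C.P Y → ∀ f : X ⟶ Y, f = 0)
    {W A X Z : D} (hX : B.P X) (hW : C.P W) {f : X ⟶ A} {g : A ⟶ Z} {h : Z ⟶ X⟦(1 : ℤ)⟧}
    (hT : Triangle.mk f g h ∈ distTriang D) (u : A ⟶ W) : ∃! ψ : Z ⟶ W, g ≫ ψ = u :=
  Triangle.existsUnique_desc _ hT u (horth _ _ hX hW _) (horth _ _ (B.shift _ _ hX) hW)

end CategoryTheory.Triangulated.Subcategory

/-- For a semiorthogonal pair `(B, C)`, two decomposition triangles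
`B₁ → A → C₁ → B₁[1]` and `B₂ → A → C₂ → B₂[1]` of the same object `A` are uniquely
isomorphic: there is a unique `φ : B₁ ⟶ B₂` commuting with the maps to `A` and it is
an isomorphism, and similarly a unique `ψ : C₁ ⟶ C₂` commuting with the maps from
`A`, which is an isomorphism. -/
theorem decomposition_triangle_unique
    {D : Type u} [Category.{v} D] [HasZeroObject D] [HasShift D ℤ] [Preadditive D]
    [∀ n : ℤ, (shiftFunctor D n).Additive] [Pretriangulated D] [IsTriangulated D]
    (B C : Triangulated.Subcategory D)
    [ObjectProperty.IsClosedUnderIsomorphisms B.P] [ObjectProperty.IsClosedUnderIsomorphisms C.P]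
    (horth : ∀ (X Y : D), B.P X → C.P Y → ∀ f : X ⟶ Y, f = 0)
    {A B₁ B₂ C₁ C₂ : D} (hB₁ : B.P B₁) (hB₂ : B.P B₂) (hC₁ : C.P C₁) (hC₂ : C.P C₂)
    (f₁ : B₁ ⟶ A) (g₁ : A ⟶ C₁) (h₁ : C₁ ⟶ B₁⟦(1 : ℤ)⟧)
    (hT₁ : Triangle.mk f₁ g₁ h₁ ∈ distTriang D)
    (f₂ : B₂ ⟶ A) (g₂ : A ⟶ C₂) (h₂ : C₂ ⟶ B₂⟦(1 : ℤ)⟧)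
    (hT₂ : Triangle.mk f₂ g₂ h₂ ∈ distTriang D) :
    (∃! φ : B₁ ⟶ B₂, φ ≫ f₂ = f₁) ∧ (∀ φ : B₁ ⟶ B₂, φ ≫ f₂ = f₁ → IsIso φ) ∧
    (∃! ψ : C₁ ⟶ C₂, g₁ ≫ ψ = g₂) ∧ (∀ ψ : C₁ ⟶ C₂, g₁ ≫ ψ = g₂ → IsIso ψ) := by
  have lift₁ {X : D} (hX : B.P X) (u : X ⟶ A) : ∃! φ : X ⟶ B₁, φ ≫ f₁ = u :=
    B.existsUnique_lift_of_orthogonal C horth hX hC₁ hT₁ u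
  have lift₂ {X : D} (hX : B.P X) (u : X ⟶ A) : ∃! φ : X ⟶ B₂, φ ≫ f₂ = u :=
    B.existsUnique_lift_of_orthogonal C horth hX hC₂ hT₂ u
  have desc₁ {Y : D} (hY : C.P Y) (u : A ⟶ Y) : ∃! ψ : C₁ ⟶ Y, g₁ ≫ ψ = u :=
    B.existsUnique_desc_of_orthogonal C horth hB₁ hY hT₁ u
  have desc₂ {Y : D} (hY : C.P Y) (u : A ⟶ Y) : ∃! ψ : C₂ ⟶ Y, g₂ ≫ ψ = u :=
    B.existsUnique_desc_of_orthogonal C horth hB₂ hY hT₂ u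
  refine ⟨lift₂ hB₁ f₁, fun φ hφ => ?_, desc₁ hC₂ g₂, fun ψ hψ => ?_⟩
  · obtain ⟨φ', hφ', -⟩ := lift₁ hB₂ f₂
    exact isIso_of_comp_eq_of_comp_eq hφ hφ'
      (fun e he => (lift₁ hB₁ f₁).unique he (Category.id_comp f₁))
      (fun e he => (lift₂ hB₂ f₂).unique he (Category.id_comp f₂))
  · obtain ⟨ψ', hψ', -⟩ := desc₂ hC₁ g₁
    exact isIso_of_eq_comp_of_eq_comp hψ hψ'
      (fun e he => (desc₁ hC₁ g₁).unique he (Category.comp_id g₁))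
      (fun e he => (desc₂ hC₂ g₂).unique he (Category.comp_id g₂))
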